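/- With P⁰, P¹ as the canonical (ε,δ) distributions on {0,1,2,3} and their i-fold products (P⁰)^i, (P¹)^i on {0,1,2,3}^i, define Dt_{ε'}(P,Q) = max over events S of (P(S) − e^{ε'}·Q(S)). Then for 0 ≤ j ≤ i, Dt_{(i−2j)ε}((P⁰)^i,(P¹)^i) = 1 − (1−δ)^i + (1−δ)^i · Σ_{l=0}^{j−1} C(i,l)·(e^{ε(i−l)} − e^{ε(i−2j+l)}) / (1+e^ε)^i. -/

import Mathlib

/-!
The hockey-stick divergence of two vectors on a finite set is the sum of the positive parts
`(P o - e^{ε'} Q o)⁺`. An outcome with a coordinate `0` has `Q o = 0` and one with a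
coordinate `3` has `P o = 0`, so every outcome outside `{1,2}^i` contributes exactly `P o`,
`1 - (1 - δ)^i` in total. An outcome in `{1,2}^i` with `l` coordinates equal to `2` has
`P o = c^i e^{ε(i-l)}` and `Q o = c^i e^{εl}` with `c = (1 - δ) / (1 + e^ε)`, so for
`ε' = (i - 2j)ε` it contributes positively exactly when `l < j`, and there are `C(i,l)` of them.
-/

/-- Canonical worst-case output distribution `P⁰` of an `(ε,δ)`-DP mechanism. -/
noncomputable def P0 (ε δ : ℝ) : Fin 4 → ℝ :=
  ![δ, (1 - δ) * Real.exp ε / (1 + Real.exp ε), (1 - δ) / (1 + Real.exp ε), 0]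

/-- Canonical worst-case output distribution `P¹` of an `(ε,δ)`-DP mechanism. -/
noncomputable def P1 (ε δ : ℝ) : Fin 4 → ℝ :=
  ![0, (1 - δ) / (1 + Real.exp ε), (1 - δ) * Real.exp ε / (1 + Real.exp ε), δ]

/-- Hockey-stick divergence `Dt_{ε'}(P,Q) = max_{S} (P(S) − e^{ε'}·Q(S))` on a finite set. -/
noncomputable def Dt {Ω : Type*} [Fintype Ω] (ε' : ℝ) (P Q : Ω → ℝ) : ℝ :=
  ⨆ S : Finset Ω, (∑ o ∈ S, P o - Real.exp ε' * ∑ o ∈ S, Q o)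

open Finset Real

section HockeyStick

variable {Ω : Type*} [Fintype Ω]

theorem iSup_finset_sum_eq_sum_max (f : Ω → ℝ) :
    (⨆ S : Finset Ω, ∑ o ∈ S, f o) = ∑ o, max (f o) 0 := by
  refine le_antisymm (ciSup_le fun S => ?_) ?_
  · calc ∑ o ∈ S, f o ≤ ∑ o ∈ S, max (f o) 0 := sum_le_sum fun o _ => le_max_left _ _
      _ ≤ ∑ o, max (f o) 0 := sum_le_univ_sum_of_nonneg fun o => le_max_right _ _
  · have hpos : ∑ o, max (f o) 0 = ∑ o ∈ univ.filter (fun o => 0 < f o), f o := by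
      rw [sum_filter]
      refine sum_congr rfl fun o _ => ?_
      split_ifs with h
      · exact max_eq_left h.le
      · exact max_eq_right (not_lt.mp h)
    rw [hpos]
    exact le_ciSup (Set.finite_range fun S : Finset Ω => ∑ o ∈ S, f o).bddAbove _

theorem Dt_eq_sum_max (ε' : ℝ) (P Q : Ω → ℝ) :
    Dt ε' P Q = ∑ o, max (P o - exp ε' * Q o) 0 := by
  simp_rw [Dt, mul_sum, ← sum_sub_distrib]
  exact iSup_finset_sum_eq_sum_max fun o => P o - exp ε' * Q o

end HockeyStick

theorem sum_piFinset_pair_eq_sum_finset {ι α M : Type*} [Fintype ι] [DecidableEq ι]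
    [DecidableEq α] [AddCommMonoid M] {x y : α} (hxy : x ≠ y) (F : (ι → α) → M) :
    ∑ o ∈ Fintype.piFinset (fun _ => ({x, y} : Finset α)), F o
      = ∑ s : Finset ι, F (fun t => if t ∈ s then y else x) := by
  have left_inv : ∀ o ∈ Fintype.piFinset (fun _ => ({x, y} : Finset α)),
      (fun t => if t ∈ (univ : Finset ι).filter (fun t => o t = y) then y else x) = o := by
    intro o ho
    funext t
    rcases mem_insert.1 (Fintype.mem_piFinset.1 ho t) with h | h
    · simp [h, hxy]
    · simp [mem_singleton.1 h]
  refine sum_nbij' (fun o => univ.filter fun t => o t = y)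
    (fun s t => if t ∈ s then y else x) (fun _ _ => mem_univ _) ?_ left_inv ?_
    (fun o ho => congrArg F (left_inv o ho).symm)
  · intro s _
    refine Fintype.mem_piFinset.2 fun t => ?_
    split_ifs <;> simp
  · intro s _
    ext t
    by_cases ht : t ∈ s <;> simp [ht, hxy]

theorem prod_apply_ite_mem {ι α M : Type*} [Fintype ι] [DecidableEq ι] [CommMonoid M]
    (s : Finset ι) (f : α → M) (x y : α) :
    ∏ t, f (if t ∈ s then y else x) = f y ^ #s * f x ^ (Fintype.card ι - #s) := by
  simp_rw [apply_ite f]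
  rw [prod_ite, prod_const, prod_const, filter_mem_eq_inter, univ_inter, filter_not,
    filter_mem_eq_inter, univ_inter, card_univ_sdiff]

theorem sum_ite_card_lt {n j : ℕ} (hj : j ≤ n) (g : ℕ → ℝ) :
    ∑ s : Finset (Fin n), (if #s < j then g #s else 0)
      = ∑ l ∈ range j, (n.choose l : ℝ) * g l := by
  rw [← powerset_univ, sum_powerset_apply_card (fun l => if l < j then g l else 0), card_univ,
    Fintype.card_fin]
  simp_rw [nsmul_eq_mul, mul_ite, mul_zero]
  rw [← sum_filter]
  congr 1
  ext l
  simp only [mem_filter, mem_range]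
  omega

section Canonical

variable (ε δ : ℝ)

theorem P0_nonneg (hδ0 : 0 ≤ δ) (hδ1 : δ ≤ 1) (k : Fin 4) : 0 ≤ P0 ε δ k := by
  have : 0 ≤ 1 - δ := by linarith
  fin_cases k <;> simp only [P0, Fin.zero_eta, Fin.mk_one, Fin.reduceFinMk, Matrix.cons_val_zero,
    Matrix.cons_val_one, Matrix.cons_val] <;> positivity

theorem P1_nonneg (hδ0 : 0 ≤ δ) (hδ1 : δ ≤ 1) (k : Fin 4) : 0 ≤ P1 ε δ k := by
  have : 0 ≤ 1 - δ := by linarith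
  fin_cases k <;> simp only [P1, Fin.zero_eta, Fin.mk_one, Fin.reduceFinMk, Matrix.cons_val_zero,
    Matrix.cons_val_one, Matrix.cons_val] <;> positivity

theorem P0_one_add_P0_two : P0 ε δ 1 + P0 ε δ 2 = 1 - δ := by
  simp only [P0, Matrix.cons_val_one, Matrix.cons_val_zero, Matrix.cons_val]
  field_simp
  ring

theorem sum_P0 : ∑ k, P0 ε δ k = 1 := by
  rw [Fin.sum_univ_four, add_assoc (P0 ε δ 0), P0_one_add_P0_two]
  simp [P0]

variable {n : ℕ}

theorem sum_prod_P0 : ∑ o : Fin n → Fin 4, ∏ t, P0 ε δ (o t) = 1 := by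
  rw [← Fintype.sum_pow, sum_P0, one_pow]

theorem sum_piFinset_prod_P0 :
    ∑ o ∈ Fintype.piFinset (fun _ : Fin n => ({1, 2} : Finset (Fin 4))), ∏ t, P0 ε δ (o t)
      = (1 - δ) ^ n := by
  rw [← prod_univ_sum]
  simp [P0_one_add_P0_two]

theorem prod_P0_ite_mem (s : Finset (Fin n)) :
    ∏ t, P0 ε δ (if t ∈ s then 2 else 1)
      = ((1 - δ) / (1 + exp ε)) ^ n * exp (ε * (n - #s)) := by
  have hs : #s ≤ n := by simpa using card_le_univ s
  rw [prod_apply_ite_mem, Fintype.card_fin]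
  simp only [P0, Matrix.cons_val]
  rw [mul_div_right_comm, mul_pow, ← mul_assoc, ← pow_add, Nat.add_sub_cancel' hs,
    ← exp_nat_mul, Nat.cast_sub hs, mul_comm ε]

theorem prod_P1_ite_mem (s : Finset (Fin n)) :
    ∏ t, P1 ε δ (if t ∈ s then 2 else 1)
      = ((1 - δ) / (1 + exp ε)) ^ n * exp (ε * #s) := by
  have hs : #s ≤ n := by simpa using card_le_univ s
  rw [prod_apply_ite_mem, Fintype.card_fin]
  simp only [P1, Matrix.cons_val]
  rw [mul_div_right_comm, mul_pow, mul_right_comm, ← pow_add, Nat.add_sub_cancel' hs,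
    ← exp_nat_mul, mul_comm ε]

theorem max_prod_P0_sub_mul_prod_P1_of_notMem (hδ0 : 0 ≤ δ) (hδ1 : δ ≤ 1) {c : ℝ}
    (hc : 0 ≤ c) {o : Fin n → Fin 4}
    (ho : o ∉ Fintype.piFinset fun _ => ({1, 2} : Finset (Fin 4))) :
    max (∏ t, P0 ε δ (o t) - c * ∏ t, P1 ε δ (o t)) 0 = ∏ t, P0 ε δ (o t) := by
  obtain ⟨t, ht⟩ := not_forall.1 (mt Fintype.mem_piFinset.2 ho)
  have hprod1 : 0 ≤ ∏ t, P1 ε δ (o t) := prod_nonneg fun t _ => P1_nonneg ε δ hδ0 hδ1 _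
  have : o t = 0 ∨ o t = 3 := by revert ht; generalize o t = k; fin_cases k <;> simp
  rcases this with h0 | h3
  · have hq : ∏ t, P1 ε δ (o t) = 0 := prod_eq_zero (mem_univ t) (by simp [h0, P1])
    rw [hq, mul_zero, sub_zero]
    exact max_eq_left (prod_nonneg fun t _ => P0_nonneg ε δ hδ0 hδ1 _)
  · have hp : ∏ t, P0 ε δ (o t) = 0 := prod_eq_zero (mem_univ t) (by simp [h3, P0])
    rw [hp]
    exact max_eq_right (by nlinarith)

end Canonical

theorem max_mul_exp_sub_mul_exp_eq_ite {c ε : ℝ} (hc : 0 ≤ c) (hε : 0 < ε) (x : ℝ)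
    (j l : ℕ) :
    max (c * exp (ε * (x - l)) - exp ((x - 2 * j) * ε) * (c * exp (ε * l))) 0
      = c * if l < j then exp (ε * (x - l)) - exp (ε * (x - 2 * j + l)) else 0 := by
  have hexp : (x - 2 * j) * ε + ε * l = ε * (x - 2 * j + l) := by ring
  rw [mul_left_comm, ← exp_add, hexp, ← mul_sub]
  split_ifs with hlj
  · refine max_eq_left (mul_nonneg hc (sub_nonneg.2 (exp_le_exp.2 ?_)))
    have : (l : ℝ) < j := by exact_mod_cast hlj
    nlinarith
  · rw [mul_zero]
    refine max_eq_right (mul_nonpos_of_nonneg_of_nonpos hc (sub_nonpos.2 (exp_le_exp.2 ?_)))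
    have : (j : ℝ) ≤ l := by exact_mod_cast not_lt.1 hlj
    nlinarith

theorem stmt15_general (ε δ : ℝ) (hε : 0 < ε) (hδ0 : 0 ≤ δ) (hδ1 : δ ≤ 1)
    (i j : ℕ) (hj : j ≤ i) :
    Dt (((i : ℝ) - 2 * (j : ℝ)) * ε)
        (fun o : Fin i → Fin 4 => ∏ t, P0 ε δ (o t))
        (fun o : Fin i → Fin 4 => ∏ t, P1 ε δ (o t))
      = 1 - (1 - δ) ^ i
        + (1 - δ) ^ i
            * ∑ l ∈ Finset.range j,
                (i.choose l : ℝ)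
                  * (Real.exp (ε * ((i : ℝ) - (l : ℝ)))
                      - Real.exp (ε * ((i : ℝ) - 2 * (j : ℝ) + (l : ℝ))))
                  / (1 + Real.exp ε) ^ i := by
  set T := Fintype.piFinset fun _ : Fin i => ({1, 2} : Finset (Fin 4))
  have hc : 0 ≤ (1 - δ) / (1 + exp ε) := div_nonneg (by linarith) (by positivity)
  have hT : ∑ o ∈ T,
      max (∏ t, P0 ε δ (o t) - exp ((i - 2 * j) * ε) * ∏ t, P1 ε δ (o t)) 0
      = ((1 - δ) / (1 + exp ε)) ^ i * ∑ l ∈ range j,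
          (i.choose l : ℝ) * (exp (ε * (i - l)) - exp (ε * (i - 2 * j + l))) := by
    rw [sum_piFinset_pair_eq_sum_finset (by decide)]
    simp_rw [prod_P0_ite_mem, prod_P1_ite_mem,
      max_mul_exp_sub_mul_exp_eq_ite (pow_nonneg hc i) hε]
    rw [← mul_sum, sum_ite_card_lt hj fun l => exp (ε * (i - l)) - exp (ε * (i - 2 * j + l))]
  have hTc : ∑ o ∈ Tᶜ,
      max (∏ t, P0 ε δ (o t) - exp ((i - 2 * j) * ε) * ∏ t, P1 ε δ (o t)) 0
      = 1 - (1 - δ) ^ i := by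
    rw [sum_congr rfl fun o ho => max_prod_P0_sub_mul_prod_P1_of_notMem ε δ hδ0 hδ1
      (exp_pos _).le (mem_compl.1 ho), eq_sub_iff_add_eq', ← sum_piFinset_prod_P0 ε δ,
      sum_add_sum_compl, sum_prod_P0]
  rw [Dt_eq_sum_max, ← sum_add_sum_compl T, hT, hTc, add_comm, div_pow, mul_sum, mul_sum]
  congr 1
  exact sum_congr rfl fun l _ => by ring

/-- Closed form for the hockey-stick divergence of `i`-fold products of the canonical
`(ε,δ)` distributions (Kairouz–Oh–Viswanath). -/
theorem stmt15 (ε δ : ℝ) (hε : 0 < ε) (hδ0 : 0 ≤ δ) (hδ1 : δ ≤ 1)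
    (i j : ℕ) (hi : 1 ≤ i) (hj : j ≤ i) :
    Dt (((i : ℝ) - 2 * (j : ℝ)) * ε)
        (fun o : Fin i → Fin 4 => ∏ t, P0 ε δ (o t))
        (fun o : Fin i → Fin 4 => ∏ t, P1 ε δ (o t))
      = 1 - (1 - δ) ^ i
        + (1 - δ) ^ i
            * ∑ l ∈ Finset.range j,
                (i.choose l : ℝ)
                  * (Real.exp (ε * ((i : ℝ) - (l : ℝ)))
                      - Real.exp (ε * ((i : ℝ) - 2 * (j : ℝ) + (l : ℝ))))
                  / (1 + Real.exp ε) ^ i :=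
  stmt15_general ε δ hε hδ0 hδ1 i j hj
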